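/- Let n ≥ 2, q ∈ ℂ \ {0}, p ∣ r with d = r/p, let ξ ∈ ℂ be a primitive p-th root of unity, let v_0,…,v_{d−1} ∈ ℂ be all nonzero, and define u_1,…,u_r by u_{lp+k+1} = ξ^k v_l for 0 ≤ k ≤ p−1, 0 ≤ l ≤ d−1 (so all u_j ≠ 0 and T_1 is a unit in ℋ_{r,1,n}(u_1,…,u_r,q)). Let τ be the algebra automorphism of ℋ_{r,1,n}(u_1,…,u_r,q) with τ(T_1) = ξ·T_1 and τ(T_i) = T_i for 2 ≤ i ≤ n. Then the fixed-point subalgebra {h ∈ ℋ_{r,1,n}(u_1,…,u_r,q) : τ(h) = h} equals the ℂ-subalgebra generated by the elements t_0 = T_1^p, t_1 = T_1^{−1}T_2T_1, and t_i = T_i for 2 ≤ i ≤ n. -/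

import Mathlib

/-!
STATEMENT 6: With n ≥ 2, q ≠ 0, r = pd, ξ a primitive p-th root of unity,
v_0,…,v_{d−1} all nonzero, u_{lp+k+1} = ξ^k v_l (so T_1 is a unit), and τ the
algebra automorphism of ℋ_{r,1,n}(u_1,…,u_r,q) with τ(T_1) = ξ·T_1 and
τ(T_i) = T_i for 2 ≤ i ≤ n, the fixed-point subalgebra {h : τ(h) = h} equals the
ℂ-subalgebra generated by t_0 = T_1^p, t_1 = T_1^{−1}T_2T_1 and t_i = T_i
(2 ≤ i ≤ n), i.e. Ariki's ℋ_{r,p,n}(v_0,…,v_{d−1},q).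
(`Ring.inverse` applied to the unit T_1 is its two-sided inverse T_1^{−1}.)
-/

noncomputable section

open FreeAlgebra
noncomputable section

open FreeAlgebra

/-- Defining relations of the cyclotomic Hecke algebra ℋ_{r,1,n}(u_1,…,u_r,q).
The generator `ι ℂ i` for `i : Fin n` represents `T_{i+1}`; `u j` denotes
`u_{j+1}` (0-indexed). -/
inductive CycloRel (n r : ℕ) (q : ℂ) (u : ℕ → ℂ) :
    FreeAlgebra ℂ (Fin n) → FreeAlgebra ℂ (Fin n) → Prop
  | comm (i j : Fin n) (h : (i : ℕ) + 1 < (j : ℕ)) :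
      CycloRel n r q u (ι ℂ i * ι ℂ j) (ι ℂ j * ι ℂ i)
  | braid (i j : Fin n) (hi : 1 ≤ (i : ℕ)) (hj : (j : ℕ) = (i : ℕ) + 1) :
      CycloRel n r q u (ι ℂ i * ι ℂ j * ι ℂ i) (ι ℂ j * ι ℂ i * ι ℂ j)
  | quartic (i j : Fin n) (hi : (i : ℕ) = 0) (hj : (j : ℕ) = 1) :
      CycloRel n r q u (ι ℂ i * ι ℂ j * ι ℂ i * ι ℂ j) (ι ℂ j * ι ℂ i * ι ℂ j * ι ℂ i)
  | cyclotomic (i : Fin n) (hi : (i : ℕ) = 0) :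
      CycloRel n r q u
        (((List.range r).map (fun k => ι ℂ i - algebraMap ℂ (FreeAlgebra ℂ (Fin n)) (u k))).prod) 0
  | quadratic (i : Fin n) (hi : 1 ≤ (i : ℕ)) :
      CycloRel n r q u ((ι ℂ i - 1) * (ι ℂ i + algebraMap ℂ (FreeAlgebra ℂ (Fin n)) q)) 0

/-- The cyclotomic Hecke algebra ℋ_{r,1,n}(u_1,…,u_r,q). -/
abbrev CyclotomicHecke (n r : ℕ) (q : ℂ) (u : ℕ → ℂ) :=
  RingQuot (CycloRel n r q u)

/-- The generator `T_{i+1}` of the cyclotomic Hecke algebra (`heckeT … 0 = T_1`). -/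
def heckeT (n r : ℕ) (q : ℂ) (u : ℕ → ℂ) (i : Fin n) : CyclotomicHecke n r q u :=
  RingQuot.mkAlgHom ℂ (CycloRel n r q u) (ι ℂ i)

/-! The cyclotomic relation has constant term `±∏ uⱼ ≠ 0`, so `T₁` is a unit. Conjugation by `T₁`
preserves the subalgebra `S` generated by the `tᵢ`: it fixes `T₁ᵖ` and `Tᵢ` (`i ≥ 2`), sends `T₂`
to `t₁`, and, by the quartic relation, sends `t₁` to `t₁ T₂ t₁⁻¹`, where `t₁⁻¹ ∈ S` because `t₁` is
conjugate to `T₂`, which satisfies a quadratic relation with nonzero constant term `-q`. Hence the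
whole algebra is spanned by the products `T₁ʲ s` with `s ∈ S`, each an eigenvector of `τ` with
eigenvalue `ξʲ`. The average `p⁻¹ ∑ₖ τᵏ` kills those with `p ∤ j`, so it maps everything into `S`,
and it fixes every `τ`-invariant element. -/

open Polynomial in
theorem isUnit_of_aeval_eq_zero {R A : Type*} [CommRing R] [Ring A] [Algebra R A]
    {P : R[X]} {a : A} (hP : aeval a P = 0) (h0 : IsUnit (P.coeff 0)) : IsUnit a := by
  obtain ⟨Q, hQ⟩ := X_dvd_sub_C (p := P)
  obtain ⟨c, hc⟩ := h0
  have hright : a * aeval a Q = -algebraMap R A c := by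
    simpa [hP, hc] using congrArg (aeval a) hQ.symm
  have hleft : aeval a Q * a = -algebraMap R A c := by
    simpa [hP, hc, mul_comm X Q] using congrArg (aeval a) hQ.symm
  refine isUnit_iff_exists.2 ⟨-(↑c⁻¹ : R) • aeval a Q, ?_, ?_⟩
  · rw [mul_smul_comm, hright, smul_neg, neg_smul, neg_neg, Algebra.smul_def, ← map_mul,
      Units.inv_mul, map_one]
  · rw [smul_mul_assoc, hleft, smul_neg, neg_smul, neg_neg, Algebra.smul_def, ← map_mul,
      Units.inv_mul, map_one]

theorem Units.conj_mem_adjoin {R A : Type*} [CommSemiring R] [Semiring A] [Algebra R A]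
    (x : Aˣ) {G : Set A} (hG : ∀ g ∈ G, ↑x⁻¹ * g * ↑x ∈ Algebra.adjoin R G) {a : A}
    (ha : a ∈ Algebra.adjoin R G) : ↑x⁻¹ * a * ↑x ∈ Algebra.adjoin R G := by
  let φ := MulSemiringAction.toAlgEquiv R A (ConjAct.toConjAct x⁻¹)
  have hle : Algebra.adjoin R G ≤ (Algebra.adjoin R G).comap φ.toAlgHom :=
    Algebra.adjoin_le fun g hg => by simpa [φ, ConjAct.units_smul_def] using hG g hg
  simpa [φ, ConjAct.units_smul_def] using hle ha

theorem span_pow_mul_eq_top {R A : Type*} [CommSemiring R] [Semiring A] [Algebra R A]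
    (x : Aˣ) (S : Subalgebra R A) (hconj : ∀ s ∈ S, ↑x⁻¹ * s * ↑x ∈ S)
    (hgen : Algebra.adjoin R (insert (x : A) S) = ⊤) :
    Submodule.span R {y | ∃ j : ℕ, ∃ s ∈ S, y = ↑x ^ j * s} = ⊤ := by
  set M := Submodule.span R {y | ∃ j : ℕ, ∃ s ∈ S, y = ↑x ^ j * s}
  have hswap : ∀ j : ℕ, ∀ s ∈ S, ∃ s' ∈ S, s * ↑x ^ j = ↑x ^ j * s' := by
    intro j
    induction j with
    | zero => exact fun s hs => ⟨s, hs, by simp⟩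
    | succ j ih =>
      intro s hs
      obtain ⟨s', hs', he⟩ := ih (↑x⁻¹ * s * ↑x) (hconj s hs)
      refine ⟨s', hs', ?_⟩
      rw [pow_succ', ← mul_assoc, mul_assoc (x : A), ← he]
      simp [mul_assoc]
  have hMM : M * M ≤ M := by
    rw [Submodule.span_mul_span, Submodule.span_le]
    rintro _ ⟨_, ⟨j, s, hs, rfl⟩, _, ⟨k, t, ht, rfl⟩, rfl⟩
    obtain ⟨s', hs', he⟩ := hswap k s hs
    refine Submodule.subset_span ⟨j + k, s' * t, S.mul_mem hs' ht, ?_⟩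
    show _ * _ * (_ * _) = _
    rw [pow_add, mul_assoc, ← mul_assoc s, he]
    simp only [mul_assoc]
  have hone : (1 : A) ∈ M := Submodule.subset_span ⟨0, 1, S.one_mem, by simp⟩
  let M' := M.toSubalgebra hone fun a b ha hb => hMM (Submodule.mul_mem_mul ha hb)
  have hle : Algebra.adjoin R (insert (x : A) S) ≤ M' := by
    refine Algebra.adjoin_le (Set.insert_subset_iff.2 ⟨?_, fun s hs => ?_⟩)
    · exact Submodule.subset_span ⟨1, 1, S.one_mem, by simp⟩
    · exact Submodule.subset_span ⟨0, s, hs, by simp⟩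
  rw [hgen] at hle
  exact eq_top_iff.2 fun a _ => hle Algebra.mem_top

theorem Module.End.pow_apply_of_apply_eq_smul {K M : Type*} [CommSemiring K] [AddCommMonoid M]
    [Module K M] {f : Module.End K M} {c : K} {b : M} (hb : f b = c • b) (k : ℕ) :
    (f ^ k) b = c ^ k • b := by
  induction k with
  | zero => simp
  | succ k ih => rw [pow_succ', Module.End.mul_apply, ih, map_smul, hb, smul_smul, pow_succ]

theorem IsPrimitiveRoot.mem_of_fixed_of_mem_span {K A : Type*} [Field K] [Ring A] [Algebra K A]
    {p : ℕ} [NeZero p] {ξ : K} (hξ : IsPrimitiveRoot ξ p) {τ : A →ₐ[K] A} {x : A}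
    {S : Subalgebra K A} (hτx : τ x = ξ • x) (hτS : ∀ s ∈ S, τ s = s) (hxp : x ^ p ∈ S) {a : A}
    (ha : a ∈ Submodule.span K {y | ∃ j : ℕ, ∃ s ∈ S, y = x ^ j * s}) (hfix : τ a = a) :
    a ∈ S := by
  let L : Module.End K A := τ.toLinearMap
  let π : Module.End K A := ∑ k ∈ Finset.range p, L ^ k
  have hπ_fix : π a = (p : K) • a := by
    have hLa : L a = (1 : K) • a := by simpa [L] using hfix
    simp [π, LinearMap.sum_apply, Module.End.pow_apply_of_apply_eq_smul hLa,
      ← Nat.cast_smul_eq_nsmul K]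
  have hπ_mem : Submodule.span K {y | ∃ j : ℕ, ∃ s ∈ S, y = x ^ j * s} ≤
      (Subalgebra.toSubmodule S).comap π := by
    rw [Submodule.span_le]
    rintro _ ⟨j, s, hs, rfl⟩
    have hL : L (x ^ j * s) = ξ ^ j • (x ^ j * s) := by
      simp [L, map_pow, hτx, hτS s hs, _root_.smul_pow]
    show π (x ^ j * s) ∈ S
    rw [LinearMap.sum_apply,
      Finset.sum_congr rfl fun k _ => Module.End.pow_apply_of_apply_eq_smul hL k,
      ← Finset.sum_smul]
    by_cases hj : p ∣ j
    · obtain ⟨e, rfl⟩ := hj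
      rw [pow_mul x]
      exact S.smul_mem (S.mul_mem (S.pow_mem hxp e) hs) _
    · have hξj : ξ ^ j ≠ 1 := fun h => hj ((hξ.pow_eq_one_iff_dvd j).1 h)
      rw [geom_sum_eq hξj, ← pow_mul, mul_comm, pow_mul, hξ.pow_eq_one, one_pow, sub_self,
        zero_div, zero_smul]
      exact S.zero_mem
  have hp : (p : K) ≠ 0 := hξ.neZero'.out
  simpa [hπ_fix, hp] using S.smul_mem (hπ_mem ha) (p : K)⁻¹

theorem IsPrimitiveRoot.fixed_iff_mem_adjoin {K A : Type*} [Field K] [Ring A] [Algebra K A]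
    {p : ℕ} [NeZero p] {ξ : K} (hξ : IsPrimitiveRoot ξ p) {τ : A →ₐ[K] A} (x : Aˣ) {G : Set A}
    (hτx : τ x = ξ • (x : A)) (hτG : ∀ g ∈ G, τ g = g) (hxp : (x : A) ^ p ∈ Algebra.adjoin K G)
    (hconj : ∀ g ∈ G, ↑x⁻¹ * g * ↑x ∈ Algebra.adjoin K G)
    (hgen : Algebra.adjoin K (insert (x : A) G) = ⊤) (a : A) :
    τ a = a ↔ a ∈ Algebra.adjoin K G := by
  have hτS : ∀ s ∈ Algebra.adjoin K G, τ s = s := fun s hs =>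
    Algebra.adjoin_le (S := AlgHom.equalizer τ (AlgHom.id K A)) hτG hs
  have hgen' : Algebra.adjoin K (insert (x : A) (Algebra.adjoin K G)) = ⊤ :=
    eq_top_iff.2 (hgen ▸ Algebra.adjoin_mono (Set.insert_subset_insert Algebra.subset_adjoin))
  have hspan := span_pow_mul_eq_top x _ (fun s hs => Units.conj_mem_adjoin x hconj hs) hgen'
  exact ⟨fun hfix => hξ.mem_of_fixed_of_mem_span hτx hτS hxp (hspan ▸ trivial) hfix, hτS a⟩

theorem ne_zero_of_eq_pow_mul {K : Type*} [MonoidWithZero K] [NoZeroDivisors K] {p d : ℕ}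
    {ξ : K} (hξ : ξ ≠ 0) {v u : ℕ → K} (hv : ∀ l < d, v l ≠ 0)
    (hu : ∀ k l : ℕ, k < p → l < d → u (l * p + k) = ξ ^ k * v l) :
    ∀ k < p * d, u k ≠ 0 := by
  intro k hk
  have hp : 0 < p := Nat.pos_of_ne_zero (by rintro rfl; simp at hk)
  have hkd : k / p < d := Nat.div_lt_of_lt_mul hk
  rw [← Nat.div_add_mod' k p, hu _ _ (Nat.mod_lt _ hp) hkd]
  exact mul_ne_zero (pow_ne_zero _ hξ) (hv _ hkd)

namespace CyclotomicHecke

variable {n r : ℕ} {q : ℂ} {u : ℕ → ℂ}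

theorem heckeT_mul_heckeT_comm (i j : Fin n) (h : (i : ℕ) + 1 < j) :
    heckeT n r q u i * heckeT n r q u j = heckeT n r q u j * heckeT n r q u i := by
  simpa [heckeT] using RingQuot.mkAlgHom_rel ℂ (CycloRel.comm (r := r) (q := q) (u := u) i j h)

theorem heckeT_quartic (i j : Fin n) (hi : (i : ℕ) = 0) (hj : (j : ℕ) = 1) :
    heckeT n r q u i * heckeT n r q u j * heckeT n r q u i * heckeT n r q u j =
      heckeT n r q u j * heckeT n r q u i * heckeT n r q u j * heckeT n r q u i := by
  simpa [heckeT] using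
    RingQuot.mkAlgHom_rel ℂ (CycloRel.quartic (r := r) (q := q) (u := u) i j hi hj)

theorem heckeT_quadratic (i : Fin n) (hi : 1 ≤ (i : ℕ)) :
    (heckeT n r q u i - 1) * (heckeT n r q u i + algebraMap ℂ _ q) = 0 := by
  simpa [heckeT] using
    RingQuot.mkAlgHom_rel ℂ (CycloRel.quadratic (r := r) (q := q) (u := u) i hi)

theorem heckeT_cyclotomic (i : Fin n) (hi : (i : ℕ) = 0) :
    ((List.range r).map fun k => heckeT n r q u i - algebraMap ℂ _ (u k)).prod = 0 := by
  simpa [heckeT, map_list_prod, Function.comp_def] using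
    RingQuot.mkAlgHom_rel ℂ (CycloRel.cyclotomic (r := r) (q := q) (u := u) i hi)

theorem adjoin_range_heckeT : Algebra.adjoin ℂ (Set.range (heckeT n r q u)) = ⊤ := by
  have hrange : Set.range (heckeT n r q u) = RingQuot.mkAlgHom ℂ _ '' Set.range (ι ℂ) := by
    rw [← Set.range_comp]
    rfl
  rw [hrange, ← AlgHom.map_adjoin, FreeAlgebra.adjoin_range_ι, Algebra.map_top,
    AlgHom.range_eq_top]
  exact RingQuot.mkAlgHom_surjective ℂ _

open Polynomial in
theorem isUnit_heckeT (i : Fin n) (hi : (i : ℕ) = 0) (hu : ∀ k < r, u k ≠ 0) :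
    IsUnit (heckeT n r q u i) := by
  refine isUnit_of_aeval_eq_zero (P := ((List.range r).map fun k => X - C (u k)).prod) ?_ ?_
  · simpa [map_list_prod, Function.comp_def] using heckeT_cyclotomic (q := q) i hi
  · rw [coeff_zero_eq_eval_zero, eval_list_prod, isUnit_iff_ne_zero]
    simp only [List.map_map, Function.comp_def, eval_sub, eval_X, eval_C, zero_sub]
    exact List.prod_ne_zero (by simpa using hu)

theorem heckeT_mul_smul_add_eq_one (i : Fin n) (hi : 1 ≤ (i : ℕ)) (hq : q ≠ 0) :
    heckeT n r q u i * (q⁻¹ • (heckeT n r q u i + algebraMap ℂ _ (q - 1))) = 1 := by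
  have h := heckeT_quadratic (r := r) (q := q) (u := u) i hi
  rw [sub_mul, mul_add, one_mul, sub_eq_zero] at h
  rw [mul_smul_comm, map_sub, map_one, ← add_sub_assoc, mul_sub, mul_add, h, mul_one,
    add_sub_cancel_left, Algebra.smul_def, ← map_mul, inv_mul_cancel₀ hq, map_one]

/-- The generators `T₁ᵖ`, `T₁⁻¹T₂T₁`, `T₂, …, Tₙ` of Ariki's `ℋ_{r,p,n}`, where the unit `U`
stands for `T₁` and `i₁` is the index of `T₂`. -/
def arikiGenerators (p : ℕ) (U : (CyclotomicHecke n r q u)ˣ) (i₁ : Fin n) :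
    Set (CyclotomicHecke n r q u) :=
  insert ((U : CyclotomicHecke n r q u) ^ p) (insert (↑U⁻¹ * heckeT n r q u i₁ * ↑U)
    {x | ∃ i : Fin n, 1 ≤ (i : ℕ) ∧ x = heckeT n r q u i})

theorem algHom_eq_self_of_mem_arikiGenerators {p : ℕ} [NeZero p] {ξ : ℂ}
    (hξ : IsPrimitiveRoot ξ p) (τ : CyclotomicHecke n r q u →ₐ[ℂ] CyclotomicHecke n r q u)
    (U : (CyclotomicHecke n r q u)ˣ) (i₁ : Fin n) (hi₁ : 1 ≤ (i₁ : ℕ))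
    (hτU : τ U = ξ • (U : CyclotomicHecke n r q u))
    (hτT : ∀ i : Fin n, 1 ≤ (i : ℕ) → τ (heckeT n r q u i) = heckeT n r q u i) :
    ∀ g ∈ arikiGenerators p U i₁, τ g = g := by
  have hξ₀ : ξ ≠ 0 := hξ.ne_zero (NeZero.ne p)
  have hτU' : τ ↑U⁻¹ = ξ⁻¹ • ↑U⁻¹ := by
    have h : ξ • (τ ↑U⁻¹ * ↑U) = 1 := by
      rw [← mul_smul_comm, ← hτU, ← map_mul, Units.inv_mul, map_one]
    calc τ ↑U⁻¹ = ξ⁻¹ • (ξ • (τ ↑U⁻¹ * ↑U)) * ↑U⁻¹ := by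
          rw [smul_smul, inv_mul_cancel₀ hξ₀, one_smul, Units.mul_inv_cancel_right]
      _ = ξ⁻¹ • ↑U⁻¹ := by rw [h, smul_mul_assoc, one_mul]
  rintro g (rfl | rfl | ⟨i, hi, rfl⟩)
  · rw [map_pow, hτU, smul_pow, hξ.pow_eq_one, one_smul]
  · rw [map_mul, map_mul, hτU', hτU, hτT i₁ hi₁, smul_mul_assoc, smul_mul_assoc, mul_smul_comm,
      smul_smul, inv_mul_cancel₀ hξ₀, one_smul]
  · exact hτT i hi

theorem conj_mem_adjoin_arikiGenerators (p : ℕ) (hq : q ≠ 0) (U : (CyclotomicHecke n r q u)ˣ)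
    (i₀ i₁ : Fin n) (h₀ : (i₀ : ℕ) = 0) (h₁ : (i₁ : ℕ) = 1) (hU : ↑U = heckeT n r q u i₀) :
    ∀ g ∈ arikiGenerators p U i₁,
      ↑U⁻¹ * g * ↑U ∈ Algebra.adjoin ℂ (arikiGenerators p U i₁) := by
  set G := arikiGenerators p U i₁
  set t₁ := ↑U⁻¹ * heckeT n r q u i₁ * ↑U
  have ht₁G : t₁ ∈ G := Set.mem_insert_of_mem _ (Set.mem_insert _ _)
  have hTG : ∀ i : Fin n, 1 ≤ (i : ℕ) → heckeT n r q u i ∈ G := fun i hi =>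
    Set.mem_insert_of_mem _ (Set.mem_insert_of_mem _ ⟨i, hi, rfl⟩)
  rintro g (rfl | rfl | ⟨i, hi, rfl⟩)
  · rw [mul_assoc, ← pow_succ, pow_succ', Units.inv_mul_cancel_left]
    exact Algebra.subset_adjoin (Set.mem_insert _ _)
  · let φ := MulSemiringAction.toAlgEquiv ℂ (CyclotomicHecke n r q u) (ConjAct.toConjAct U⁻¹)
    have hφ : ∀ y, φ y = ↑U⁻¹ * y * ↑U := fun y => by simp [φ, ConjAct.units_smul_def]
    have hinv : t₁ * (q⁻¹ • (t₁ + algebraMap ℂ _ (q - 1))) = 1 := by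
      have h := congrArg φ (heckeT_mul_smul_add_eq_one (r := r) (u := u) i₁ h₁.ge hq)
      rwa [map_mul, map_smul, map_add, AlgEquiv.commutes, map_one, hφ] at h
    have hquartic : (↑U⁻¹ * t₁ * ↑U) * t₁ = t₁ * heckeT n r q u i₁ := by
      have h := heckeT_quartic (r := r) (q := q) (u := u) i₀ i₁ h₀ h₁
      rw [← hU] at h
      simp only [mul_assoc] at h
      simp only [t₁, mul_assoc, Units.mul_inv_cancel_left]
      rw [← h, Units.inv_mul_cancel_left]
    have hconj : ↑U⁻¹ * t₁ * ↑U =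
        t₁ * heckeT n r q u i₁ * (q⁻¹ • (t₁ + algebraMap ℂ _ (q - 1))) := by
      rw [← hquartic, mul_assoc (↑U⁻¹ * t₁ * ↑U) t₁, hinv, mul_one]
    rw [hconj]
    refine Subalgebra.mul_mem _ (Subalgebra.mul_mem _ ?_ ?_) (Subalgebra.smul_mem _
      (Subalgebra.add_mem _ ?_ (Subalgebra.algebraMap_mem _ _)) _)
    · exact Algebra.subset_adjoin ht₁G
    · exact Algebra.subset_adjoin (hTG i₁ h₁.ge)
    · exact Algebra.subset_adjoin ht₁G
  · rcases (show (i : ℕ) = 1 ∨ 2 ≤ (i : ℕ) by omega) with hi₁ | hi₂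
    · obtain rfl : i = i₁ := Fin.ext (hi₁.trans h₁.symm)
      exact Algebra.subset_adjoin ht₁G
    · have hcomm := heckeT_mul_heckeT_comm (r := r) (q := q) (u := u) i₀ i (by omega)
      rw [← hU] at hcomm
      rw [mul_assoc, ← hcomm, Units.inv_mul_cancel_left]
      exact Algebra.subset_adjoin (hTG i hi)

theorem adjoin_insert_arikiGenerators_eq_top (p : ℕ) (U : (CyclotomicHecke n r q u)ˣ)
    (i₀ i₁ : Fin n) (h₀ : (i₀ : ℕ) = 0) (hU : ↑U = heckeT n r q u i₀) :
    Algebra.adjoin ℂ (insert (U : CyclotomicHecke n r q u) (arikiGenerators p U i₁)) = ⊤ := by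
  refine eq_top_iff.2 (adjoin_range_heckeT (n := n) ▸ Algebra.adjoin_mono ?_)
  rintro _ ⟨i, rfl⟩
  rcases Nat.eq_zero_or_pos i with hi | hi
  · obtain rfl : i = i₀ := Fin.ext (hi.trans h₀.symm)
    exact hU ▸ Set.mem_insert _ _
  · exact Set.mem_insert_of_mem _ (Set.mem_insert_of_mem _ (Set.mem_insert_of_mem _ ⟨i, hi, rfl⟩))

end CyclotomicHecke

theorem cyclotomicHecke_fixed_subalgebra
    (n p d r : ℕ) (hn : 2 ≤ n) (hp : 1 ≤ p) (hr : r = p * d)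
    (q : ℂ) (hq : q ≠ 0)
    (ξ : ℂ) (hξ : IsPrimitiveRoot ξ p)
    (v : ℕ → ℂ) (hv : ∀ l < d, v l ≠ 0)
    (u : ℕ → ℂ)
    (hu : ∀ k l : ℕ, k < p → l < d → u (l * p + k) = ξ ^ k * v l)
    (τ : CyclotomicHecke n r q u ≃ₐ[ℂ] CyclotomicHecke n r q u)
    (hτ1 : τ (heckeT n r q u ⟨0, by omega⟩) = ξ • heckeT n r q u ⟨0, by omega⟩)
    (hτi : ∀ i : Fin n, 1 ≤ (i : ℕ) → τ (heckeT n r q u i) = heckeT n r q u i) :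
    ∀ h : CyclotomicHecke n r q u, τ h = h ↔
      h ∈ Algebra.adjoin ℂ
        (insert ((heckeT n r q u ⟨0, by omega⟩) ^ p)
          (insert (Ring.inverse (heckeT n r q u ⟨0, by omega⟩) *
              heckeT n r q u ⟨1, by omega⟩ * heckeT n r q u ⟨0, by omega⟩)
            {x | ∃ i : Fin n, 1 ≤ (i : ℕ) ∧ x = heckeT n r q u i})) := by
  have : NeZero p := ⟨by omega⟩
  have hu₀ : ∀ k < r, u k ≠ 0 := hr ▸ ne_zero_of_eq_pow_mul (hξ.ne_zero (NeZero.ne p)) hv hu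
  obtain ⟨U, hU⟩ := CyclotomicHecke.isUnit_heckeT (q := q) (⟨0, by omega⟩ : Fin n) rfl hu₀
  rw [← hU] at hτ1
  intro h
  rw [← hU, Ring.inverse_unit]
  exact hξ.fixed_iff_mem_adjoin (τ := τ.toAlgHom) U hτ1
    (CyclotomicHecke.algHom_eq_self_of_mem_arikiGenerators hξ τ.toAlgHom U _ le_rfl hτ1 hτi)
    (Algebra.subset_adjoin (Set.mem_insert _ _))
    (CyclotomicHecke.conj_mem_adjoin_arikiGenerators p hq U _ _ rfl rfl hU)
    (CyclotomicHecke.adjoin_insert_arikiGenerators_eq_top p U _ _ rfl hU) h
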